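/- arXiv:0909.5667 — 3 statements merged into one kernel-verified Lean document; each statement's English description precedes it below -/
import Mathlib

section
/- Let 𝒩 ⊆ ℤ be a set of positive forward density, meaning the limit Δ⁺(𝒩) = lim_{n→∞} (1/(n+1))·#{0 ≤ i ≤ n : i ∈ 𝒩} exists and is strictly positive. Then for every ε > 0, every k ∈ ℕ with k ≥ 1, and every finite set Q = {q₁, q₂, ..., q_k} of integers with q₁ < q₂ < ... < q_k, there exists N ∈ ℕ such that for all n ≥ N there exist k pairwise distinct integers r₁, ..., r_k, all belonging to 𝒩 ∩ {0, 1, ..., n}, satisfying |r_i − τ_i| < nε for every i = 1, ..., k, where τ₁ = 0 and, if k > 1, τ_i = n·(q_i − q₁)/(q_k − q₁) for i = 2, ..., k (so in particular τ_k = n). -/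
private lemma snoc_inj {α : Type*} {m : ℕ} {r : Fin m → α} {x : α}
    (hr : Function.Injective r) (hx : x ∉ Set.range r) :
    Function.Injective (Fin.snoc r x : Fin (m + 1) → α) := by
  intro i j hij
  rcases Fin.eq_castSucc_or_eq_last i with ⟨i', rfl⟩ | rfl <;>
    rcases Fin.eq_castSucc_or_eq_last j with ⟨j', rfl⟩ | rfl
  · simp only [Fin.snoc_castSucc] at hij
    exact congrArg _ (hr hij)
  · simp only [Fin.snoc_castSucc, Fin.snoc_last] at hij
    exact absurd ⟨i', hij⟩ hx
  · simp only [Fin.snoc_castSucc, Fin.snoc_last] at hij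
    exact absurd ⟨j', hij.symm⟩ hx
  · rfl

private lemma exists_inj_choice {α : Type*} :
    ∀ (k : ℕ) (S : Fin k → Set α), (∀ i, (S i).Finite) → (∀ i, k ≤ (S i).ncard) →
      ∃ r : Fin k → α, Function.Injective r ∧ ∀ i, r i ∈ S i := by
  intro k
  induction k with
  | zero => exact fun S _ _ => ⟨Fin.elim0, fun i => i.elim0, fun i => i.elim0⟩
  | succ m ih =>
    intro S hfin hcard
    obtain ⟨r, hr, hmem⟩ := ih (fun i => S i.castSucc) (fun i => hfin _)
      (fun i => le_trans (Nat.le_succ m) (hcard _))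
    have hrange : (Set.range r).ncard ≤ m := by
      rw [← Set.image_univ]
      refine le_trans (Set.ncard_image_le Set.finite_univ) ?_
      simp [Set.ncard_univ]
    have hlt : (Set.range r).ncard < (S (Fin.last m)).ncard :=
      lt_of_le_of_lt hrange (lt_of_lt_of_le (Nat.lt_succ_self m) (hcard _))
    obtain ⟨x, hxS, hxr⟩ :=
      Set.exists_mem_notMem_of_ncard_lt_ncard hlt (Set.finite_range r)
    refine ⟨Fin.snoc r x, snoc_inj hr hxr, ?_⟩
    intro i
    rcases Fin.eq_castSucc_or_eq_last i with ⟨i', rfl⟩ | rfl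
    · simpa using hmem i'
    · simpa using hxS

/-- **Main Theorem** (Bessa–Carvalho, "Imperfect friezes of integers").
If `𝒩 ⊆ ℤ` has positive forward density
`Δ⁺(𝒩) = lim_{n→∞} (1/(n+1)) · #{0 ≤ i ≤ n : i ∈ 𝒩} = d > 0`,
then for every `ε > 0`, every `k ≥ 1` and every strictly increasing tuple of
integers `q₁ < ⋯ < q_k`, there is `N` such that for all `n ≥ N` one can find
pairwise distinct `r₁, …, r_k ∈ 𝒩 ∩ {0, …, n}` with `|rᵢ − τᵢ| < n·ε`, where
`τᵢ = n·(qᵢ − q₁)/(q_k − q₁)` (interpreted as `τ₁ = 0` when `k = 1`, which is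
what the division-by-zero convention gives). -/
theorem main_theorem
    (𝒩 : Set ℤ) (d : ℝ) (hd : 0 < d)
    (hdens : Filter.Tendsto
      (fun n : ℕ => ((𝒩 ∩ Set.Icc (0 : ℤ) (n : ℤ)).ncard : ℝ) / ((n : ℝ) + 1))
      Filter.atTop (nhds d))
    (ε : ℝ) (hε : 0 < ε)
    (k : ℕ) (hk : 1 ≤ k)
    (q : Fin k → ℤ) (hq : StrictMono q) :
    ∃ N : ℕ, ∀ n : ℕ, N ≤ n →
      ∃ r : Fin k → ℤ, Function.Injective r ∧
        (∀ i : Fin k, r i ∈ 𝒩 ∧ 0 ≤ r i ∧ r i ≤ (n : ℤ)) ∧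
        (∀ i : Fin k,
          |(r i : ℝ) - (n : ℝ) *
            (((q i - q ⟨0, by omega⟩ : ℤ) : ℝ) /
              ((q ⟨k - 1, by omega⟩ - q ⟨0, by omega⟩ : ℤ) : ℝ))| < (n : ℝ) * ε) := by
  -- parameters
  obtain ⟨ε', hε'def⟩ : ∃ x : ℝ, x = min ε 1 / 2 := ⟨_, rfl⟩
  have hminpos : 0 < min ε 1 := lt_min hε one_pos
  have hε'pos : 0 < ε' := by rw [hε'def]; positivity
  have hε'lt : ε' < ε := by
    have h1 : min ε 1 ≤ ε := min_le_left _ _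
    rw [hε'def]; linarith
  have hε'le1 : ε' ≤ 1 := by
    have h1 : min ε 1 ≤ 1 := min_le_right _ _
    rw [hε'def]; linarith
  obtain ⟨δ, hδdef⟩ : ∃ x : ℝ, x = ε' / 2 := ⟨_, rfl⟩
  have hδpos : 0 < δ := by rw [hδdef]; positivity
  obtain ⟨η, hηdef⟩ : ∃ x : ℝ, x = d * δ / 4 := ⟨_, rfl⟩
  have hηpos : 0 < η := by rw [hηdef]; positivity
  rw [Metric.tendsto_atTop] at hdens
  obtain ⟨M0, hM0⟩ := hdens η hηpos
  -- finiteness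
  have hfin : ∀ a b : ℤ, (𝒩 ∩ Set.Icc a b).Finite :=
    fun a b => (Set.finite_Icc a b).inter_of_right _
  -- count function
  obtain ⟨c, hcdef⟩ : ∃ f : ℤ → ℝ, f = fun a => ((𝒩 ∩ Set.Icc (0 : ℤ) a).ncard : ℝ) := ⟨_, rfl⟩
  have hc_eq : ∀ a : ℤ, 0 ≤ a → c a = ((𝒩 ∩ Set.Icc (0 : ℤ) ((a.toNat : ℕ) : ℤ)).ncard : ℝ) := by
    intro a ha
    rw [hcdef]
    simp [Int.toNat_of_nonneg ha]
  have hc_le : ∀ a : ℤ, 0 ≤ a → c a ≤ (a : ℝ) + 1 := by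
    intro a ha
    simp only [hcdef]
    have h1 : (𝒩 ∩ Set.Icc (0 : ℤ) a).ncard ≤ (Set.Icc (0 : ℤ) a).ncard :=
      Set.ncard_le_ncard Set.inter_subset_right (Set.finite_Icc _ _)
    have h2 : (Set.Icc (0 : ℤ) a).ncard = (a + 1).toNat := by
      rw [← Finset.coe_Icc, Set.ncard_coe_finset, Int.card_Icc]
      congr 1; ring
    rw [h2] at h1
    have h3 : (((a + 1).toNat : ℤ) : ℝ) = (a : ℝ) + 1 := by
      rw [Int.toNat_of_nonneg (by omega)]; push_cast; ring
    calc ((𝒩 ∩ Set.Icc (0 : ℤ) a).ncard : ℝ) ≤ (((a + 1).toNat : ℤ) : ℝ) := by exact_mod_cast h1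
      _ = (a : ℝ) + 1 := h3
  -- bounds from the density hypothesis
  have hc_lb : ∀ b : ℤ, (M0 : ℝ) ≤ (b : ℝ) → (d - η) * ((b : ℝ) + 1) ≤ c b := by
    intro b hb
    have hb0 : 0 ≤ b := by
      have h0 : (0 : ℝ) ≤ (b : ℝ) := le_trans (by positivity) hb
      exact_mod_cast h0
    have hbM : M0 ≤ b.toNat := by
      have : (M0 : ℝ) ≤ ((b.toNat : ℕ) : ℝ) := by
        rwa [show ((b.toNat : ℕ) : ℝ) = (b : ℝ) by exact_mod_cast congrArg Int.cast (Int.toNat_of_nonneg hb0)]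
      exact_mod_cast this
    have := hM0 b.toNat hbM
    rw [Real.dist_eq, abs_lt] at this
    have hcast : ((b.toNat : ℕ) : ℝ) = (b : ℝ) := by
      exact_mod_cast congrArg Int.cast (Int.toNat_of_nonneg hb0)
    rw [hc_eq b hb0]
    have hpos : (0 : ℝ) < ((b.toNat : ℕ) : ℝ) + 1 := by positivity
    have h1 := this.1
    rw [← hcast]
    have h2 : d - η < ((𝒩 ∩ Set.Icc (0 : ℤ) ((b.toNat : ℕ) : ℤ)).ncard : ℝ) / (((b.toNat : ℕ) : ℝ) + 1) := by
      linarith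
    exact le_of_lt ((lt_div_iff₀ hpos).mp h2)
  have hc_ub : ∀ a : ℤ, 0 ≤ a → c a ≤ (d + η) * ((a : ℝ) + 1) + ((M0 : ℝ) + 1) := by
    intro a ha
    by_cases hcase : M0 ≤ a.toNat
    · have := hM0 a.toNat hcase
      rw [Real.dist_eq, abs_lt] at this
      have hpos : (0 : ℝ) < ((a.toNat : ℕ) : ℝ) + 1 := by positivity
      have h1 : ((𝒩 ∩ Set.Icc (0 : ℤ) ((a.toNat : ℕ) : ℤ)).ncard : ℝ) / (((a.toNat : ℕ) : ℝ) + 1)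
          < d + η := by linarith [this.2]
      rw [div_lt_iff₀ hpos] at h1
      have hcast : ((a.toNat : ℕ) : ℝ) = (a : ℝ) := by
        exact_mod_cast congrArg Int.cast (Int.toNat_of_nonneg ha)
      rw [hc_eq a ha]
      rw [hcast] at h1
      have hM0nn : (0 : ℝ) ≤ (M0 : ℝ) + 1 := by positivity
      linarith
    · have h1 : c a ≤ (a : ℝ) + 1 := hc_le a ha
      have h2 : (a : ℝ) ≤ (M0 : ℝ) := by
        have : (a.toNat : ℕ) ≤ M0 := le_of_not_ge hcase
        have h3 : ((a.toNat : ℕ) : ℝ) ≤ (M0 : ℝ) := by exact_mod_cast this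
        rwa [show ((a.toNat : ℕ) : ℝ) = (a : ℝ) by
          exact_mod_cast congrArg Int.cast (Int.toNat_of_nonneg ha)] at h3
      have h4 : (0 : ℝ) ≤ (d + η) * ((a : ℝ) + 1) := by
        have : (0 : ℝ) ≤ (a : ℝ) + 1 := by
          have : (0 : ℝ) ≤ (a : ℝ) := by exact_mod_cast ha
          linarith
        positivity
      linarith
  -- subadditivity
  have hsplit : ∀ a b : ℤ, 0 ≤ a → a ≤ b → c b ≤ c a + ((𝒩 ∩ Set.Icc a b).ncard : ℝ) := by
    intro a b ha hab
    have hsub : 𝒩 ∩ Set.Icc (0 : ℤ) b ⊆ (𝒩 ∩ Set.Icc (0 : ℤ) a) ∪ (𝒩 ∩ Set.Icc a b) := by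
      rintro x ⟨hx1, hx2, hx3⟩
      rcases le_total x a with h | h
      · exact Or.inl ⟨hx1, hx2, h⟩
      · exact Or.inr ⟨hx1, h, hx3⟩
    have h1 : (𝒩 ∩ Set.Icc (0 : ℤ) b).ncard ≤
        ((𝒩 ∩ Set.Icc (0 : ℤ) a) ∪ (𝒩 ∩ Set.Icc a b)).ncard :=
      Set.ncard_le_ncard hsub ((hfin 0 a).union (hfin a b))
    have h2 := Set.ncard_union_le (𝒩 ∩ Set.Icc (0 : ℤ) a) (𝒩 ∩ Set.Icc a b)
    simp only [hcdef]
    exact_mod_cast le_trans h1 h2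
  -- choose N
  obtain ⟨N2, hN2⟩ := exists_nat_ge (((k : ℝ) + (M0 : ℝ) + 2 + d * δ) / (d * δ / 2))
  obtain ⟨N3, hN3⟩ := exists_nat_ge ((M0 : ℝ) / δ)
  obtain ⟨N4, hN4⟩ := exists_nat_ge (4 / ε')
  refine ⟨max (max N2 N3) (max N4 1), ?_⟩
  intro n hn
  have hnN2 : N2 ≤ n := le_trans (le_trans (le_max_left _ _) (le_max_left _ _)) hn
  have hnN3 : N3 ≤ n := le_trans (le_trans (le_max_right _ _) (le_max_left _ _)) hn
  have hnN4 : N4 ≤ n := le_trans (le_trans (le_max_left _ _) (le_max_right _ _)) hn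
  have hn1 : 1 ≤ n := le_trans (le_trans (le_max_right _ _) (le_max_right _ _)) hn
  have hnR : (1 : ℝ) ≤ (n : ℝ) := by exact_mod_cast hn1
  have hnpos : (0 : ℝ) < (n : ℝ) := by linarith
  have hM0n : (M0 : ℝ) ≤ δ * (n : ℝ) := by
    have h1 : (M0 : ℝ) / δ ≤ (n : ℝ) := le_trans hN3 (by exact_mod_cast hnN3)
    rw [div_le_iff₀ hδpos] at h1
    linarith
  have h4n : (4 : ℝ) ≤ ε' * (n : ℝ) := by
    have h1 : 4 / ε' ≤ (n : ℝ) := le_trans hN4 (by exact_mod_cast hnN4)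
    rw [div_le_iff₀ hε'pos] at h1
    linarith
  have hkn : (k : ℝ) + (M0 : ℝ) + 2 + d * δ ≤ (d * δ / 2) * (n : ℝ) := by
    have h1 : ((k : ℝ) + (M0 : ℝ) + 2 + d * δ) / (d * δ / 2) ≤ (n : ℝ) :=
      le_trans hN2 (by exact_mod_cast hnN2)
    rw [div_le_iff₀ (half_pos (mul_pos hd hδpos))] at h1
    linarith
  -- the key counting estimate
  have hkey : ∀ a b : ℤ, 0 ≤ a → b ≤ (n : ℤ) → (a : ℝ) + δ * (n : ℝ) ≤ (b : ℝ) →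
      k ≤ (𝒩 ∩ Set.Icc a b).ncard := by
    intro a b ha hb hab
    have haR : (0 : ℝ) ≤ (a : ℝ) := by exact_mod_cast ha
    have hbR : (b : ℝ) ≤ (n : ℝ) := by exact_mod_cast hb
    have hbM0 : (M0 : ℝ) ≤ (b : ℝ) := by linarith
    have hab' : a ≤ b := by
      have hδn : 0 < δ * (n : ℝ) := mul_pos hδpos hnpos
      have : (a : ℝ) ≤ (b : ℝ) := by linarith
      exact_mod_cast this
    have h1 := hsplit a b ha hab'
    have h2 := hc_lb b hbM0
    have h3 := hc_ub a ha
    have h4 : (k : ℝ) ≤ ((𝒩 ∩ Set.Icc a b).ncard : ℝ) := by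
      have e1 : ((𝒩 ∩ Set.Icc a b).ncard : ℝ) ≥
          (d - η) * ((b : ℝ) + 1) - ((d + η) * ((a : ℝ) + 1) + ((M0 : ℝ) + 1)) := by
        linarith
      rw [hηdef] at e1
      have p1 : 0 ≤ d * ((b : ℝ) - (a : ℝ) - δ * (n : ℝ)) :=
        mul_nonneg hd.le (by linarith)
      have p2 : 0 ≤ (d * δ / 4) * (2 * (n : ℝ) + 2 - (a : ℝ) - (b : ℝ)) :=
        mul_nonneg (by linarith [mul_pos hd hδpos]) (by linarith)
      linarith [e1, p1, p2, hkn]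
    exact_mod_cast h4
  -- the targets
  have hk0 : 0 < k := hk
  have hk1 : k - 1 < k := by omega
  have hmono := hq.monotone
  obtain ⟨ρ, hρdef⟩ : ∃ f : Fin k → ℝ, f = fun i =>
      ((q i - q ⟨0, hk0⟩ : ℤ) : ℝ) / ((q ⟨k - 1, hk1⟩ - q ⟨0, hk0⟩ : ℤ) : ℝ) := ⟨_, rfl⟩
  have hρ : ∀ i : Fin k, 0 ≤ ρ i ∧ ρ i ≤ 1 := by
    intro i
    have h0i : q ⟨0, hk0⟩ ≤ q i := hmono (by rw [Fin.le_def]; exact Nat.zero_le _)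
    have hit : q i ≤ q ⟨k - 1, hk1⟩ := hmono (by
      rw [Fin.le_def]
      have h := i.isLt
      show i.val ≤ k - 1
      omega)
    simp only [hρdef]
    rcases eq_or_lt_of_le (le_trans h0i hit) with heq | hlt
    · have hqe : q i = q ⟨0, hk0⟩ := le_antisymm (heq ▸ hit) h0i
      rw [hqe]
      simp
    · have hd0 : (0 : ℝ) < ((q ⟨k - 1, hk1⟩ - q ⟨0, hk0⟩ : ℤ) : ℝ) := by
        have : (0 : ℤ) < q ⟨k - 1, hk1⟩ - q ⟨0, hk0⟩ := by omega
        exact_mod_cast this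
      constructor
      · apply div_nonneg _ hd0.le
        have : (0 : ℤ) ≤ q i - q ⟨0, hk0⟩ := by omega
        exact_mod_cast this
      · rw [div_le_one hd0]
        have : q i - q ⟨0, hk0⟩ ≤ q ⟨k - 1, hk1⟩ - q ⟨0, hk0⟩ := by omega
        exact_mod_cast this
  -- the intervals
  obtain ⟨A, hAdef⟩ : ∃ f : Fin k → ℤ,
      f = fun i => ⌈max 0 ((n : ℝ) * ρ i - (n : ℝ) * ε')⌉ := ⟨_, rfl⟩
  obtain ⟨B, hBdef⟩ : ∃ f : Fin k → ℤ,
      f = fun i => ⌊min ((n : ℝ)) ((n : ℝ) * ρ i + (n : ℝ) * ε')⌋ := ⟨_, rfl⟩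
  have hA0 : ∀ i, 0 ≤ A i := by
    intro i; simp only [hAdef]; exact Int.ceil_nonneg (le_max_left _ _)
  have hBn : ∀ i, B i ≤ (n : ℤ) := by
    intro i; simp only [hBdef]
    have h := Int.floor_le_floor (min_le_left ((n : ℝ)) ((n : ℝ) * ρ i + (n : ℝ) * ε'))
    simpa using h
  have hAL : ∀ i, (A i : ℝ) < max 0 ((n : ℝ) * ρ i - (n : ℝ) * ε') + 1 := by
    intro i; simp only [hAdef]; exact Int.ceil_lt_add_one _
  have hAL' : ∀ i, max 0 ((n : ℝ) * ρ i - (n : ℝ) * ε') ≤ (A i : ℝ) := by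
    intro i; simp only [hAdef]; exact Int.le_ceil _
  have hBU : ∀ i, (B i : ℝ) ≤ min ((n : ℝ)) ((n : ℝ) * ρ i + (n : ℝ) * ε') := by
    intro i; simp only [hBdef]; exact Int.floor_le _
  have hBU' : ∀ i, min ((n : ℝ)) ((n : ℝ) * ρ i + (n : ℝ) * ε') - 1 < (B i : ℝ) := by
    intro i; simp only [hBdef]; exact Int.sub_one_lt_floor _
  have hlen : ∀ i, max 0 ((n : ℝ) * ρ i - (n : ℝ) * ε') + (n : ℝ) * ε' ≤
      min ((n : ℝ)) ((n : ℝ) * ρ i + (n : ℝ) * ε') := by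
    intro i
    obtain ⟨hρ0, hρ1⟩ := hρ i
    have hτ0 : 0 ≤ (n : ℝ) * ρ i := mul_nonneg hnpos.le hρ0
    have hτn : (n : ℝ) * ρ i ≤ (n : ℝ) := by
      have := mul_le_mul_of_nonneg_left hρ1 hnpos.le
      linarith
    have hεn' : (n : ℝ) * ε' ≤ (n : ℝ) := by
      have := mul_le_mul_of_nonneg_left hε'le1 hnpos.le
      linarith
    have hεn0 : 0 ≤ (n : ℝ) * ε' := mul_nonneg hnpos.le hε'pos.le
    rw [le_min_iff]
    constructor
    · have hmax : max 0 ((n : ℝ) * ρ i - (n : ℝ) * ε') ≤ (n : ℝ) - (n : ℝ) * ε' :=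
        max_le (by linarith) (by linarith)
      linarith
    · have hmax : max 0 ((n : ℝ) * ρ i - (n : ℝ) * ε') ≤ (n : ℝ) * ρ i :=
        max_le hτ0 (by linarith)
      linarith
  have hgap : ∀ i, (A i : ℝ) + δ * (n : ℝ) ≤ (B i : ℝ) := by
    intro i
    have h1 := hAL i
    have h2 := hBU' i
    have h3 := hlen i
    have hδε : δ * (n : ℝ) = ε' * (n : ℝ) / 2 := by rw [hδdef]; ring
    have h4 : (4 : ℝ) ≤ ε' * (n : ℝ) := h4n
    linarith
  -- choose the points
  obtain ⟨r, hrinj, hrmem⟩ := exists_inj_choice k (fun i => 𝒩 ∩ Set.Icc (A i) (B i))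
    (fun i => hfin _ _) (fun i => hkey _ _ (hA0 i) (hBn i) (hgap i))
  refine ⟨r, hrinj, ?_, ?_⟩
  · intro i
    obtain ⟨h1, h2, h3⟩ := hrmem i
    exact ⟨h1, le_trans (hA0 i) h2, le_trans h3 (hBn i)⟩
  · intro i
    obtain ⟨h1, h2, h3⟩ := hrmem i
    have h2R : (A i : ℝ) ≤ (r i : ℝ) := by exact_mod_cast h2
    have h3R : (r i : ℝ) ≤ (B i : ℝ) := by exact_mod_cast h3
    have hri1 : (n : ℝ) * ρ i - (n : ℝ) * ε' ≤ (r i : ℝ) := by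
      have hm := hAL' i
      have hm2 := le_max_right (0 : ℝ) ((n : ℝ) * ρ i - (n : ℝ) * ε')
      linarith
    have hri2 : (r i : ℝ) ≤ (n : ℝ) * ρ i + (n : ℝ) * ε' := by
      have hm := hBU i
      have hm2 := min_le_right ((n : ℝ)) ((n : ℝ) * ρ i + (n : ℝ) * ε')
      linarith
    have habs : |(r i : ℝ) - (n : ℝ) * ρ i| ≤ (n : ℝ) * ε' :=
      abs_le.mpr ⟨by linarith, by linarith⟩
    have hfinal : (n : ℝ) * ε' < (n : ℝ) * ε := by
      have := mul_lt_mul_of_pos_left hε'lt hnpos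
      linarith
    have hgoal := lt_of_le_of_lt habs hfinal
    rw [hρdef] at hgoal
    exact hgoal
end

section
/- Let 𝒩 ⊆ ℤ have positive forward density, i.e., Δ⁺(𝒩) = lim_{n→∞} (1/(n+1))·#{0 ≤ i ≤ n : i ∈ 𝒩} exists and is positive. Then for every ε̄ > 0 there exists N₀ ∈ ℕ such that for all n ≥ N₀ and all real t ∈ [0,1], there exists an integer r with 0 ≤ r ≤ n, r ∈ 𝒩, and |r/n − t| < ε̄. -/
set_option maxHeartbeats 1600000 in
/-- **Lemma 2** of the paper, stated in terms of the set `𝒩`. If `𝒩 ⊆ ℤ` has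
positive forward density, then for every `ε̄ > 0` there is `N₀` such that for
all `n ≥ N₀` and all `t ∈ [0,1]` there is an integer `r ∈ 𝒩` with `0 ≤ r ≤ n`
and `|r/n − t| < ε̄`. -/
theorem approx_lemma
    (𝒩 : Set ℤ) (d : ℝ) (hd : 0 < d)
    (hdens : Filter.Tendsto
      (fun n : ℕ => ((𝒩 ∩ Set.Icc (0 : ℤ) (n : ℤ)).ncard : ℝ) / ((n : ℝ) + 1))
      Filter.atTop (nhds d))
    (ε : ℝ) (hε : 0 < ε) :
    ∃ N₀ : ℕ, ∀ n : ℕ, N₀ ≤ n → ∀ t : ℝ, t ∈ Set.Icc (0 : ℝ) 1 →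
      ∃ r : ℤ, 0 ≤ r ∧ r ≤ (n : ℤ) ∧ r ∈ 𝒩 ∧ |(r : ℝ) / (n : ℝ) - t| < ε := by
  set ε₁ : ℝ := min ε 1 with hε₁def
  have hε₁ : 0 < ε₁ := lt_min hε one_pos
  have hε₁le : ε₁ ≤ ε := min_le_left _ _
  have hε₁1 : ε₁ ≤ 1 := min_le_right _ _
  set δ : ℝ := d * ε₁ / 64 with hδdef
  have hδ : 0 < δ := by positivity
  set c : ℕ → ℝ := fun m => ((𝒩 ∩ Set.Icc (0 : ℤ) (m : ℤ)).ncard : ℝ) with hc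
  obtain ⟨M, hM⟩ := (Metric.tendsto_atTop.mp hdens) δ hδ
  have hlow : ∀ m : ℕ, M ≤ m → (d - δ) * ((m : ℝ) + 1) < c m := by
    intro m hm
    have h1 := hM m hm
    rw [Real.dist_eq, abs_lt] at h1
    have hm1 : (0:ℝ) < (m:ℝ) + 1 := by positivity
    have h2 : d - δ < c m / ((m:ℝ) + 1) := by linarith [h1.1]
    exact (lt_div_iff₀ hm1).mp h2
  have hhigh : ∀ m : ℕ, M ≤ m → c m < (d + δ) * ((m : ℝ) + 1) := by
    intro m hm
    have h1 := hM m hm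
    rw [Real.dist_eq, abs_lt] at h1
    have hm1 : (0:ℝ) < (m:ℝ) + 1 := by positivity
    have h2 : c m / ((m:ℝ) + 1) < d + δ := by linarith [h1.2]
    exact (div_lt_iff₀ hm1).mp h2
  obtain ⟨N₂, hN₂⟩ := exists_nat_ge (8 * (M : ℝ) / ε₁ + 8 / ε₁ + 1)
  refine ⟨max 1 N₂, ?_⟩
  intro n hn t ht
  have hn1 : 1 ≤ n := le_trans (le_max_left _ _) hn
  have hnpos : (0:ℝ) < (n:ℝ) := by exact_mod_cast Nat.lt_of_lt_of_le Nat.zero_lt_one hn1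
  have hnN₂ : (8 * (M : ℝ) / ε₁ + 8 / ε₁ + 1) ≤ (n:ℝ) := by
    refine le_trans hN₂ ?_
    exact_mod_cast le_trans (le_max_right 1 N₂) hn
  have hMn : (M : ℝ) ≤ ε₁ * (n:ℝ) / 8 := by
    have h1 : 8 * (M:ℝ) / ε₁ ≤ (n:ℝ) := by
      have : (0:ℝ) ≤ 8 / ε₁ := by positivity
      linarith
    rw [div_le_iff₀ hε₁] at h1
    linarith
  have h8n : (8:ℝ) / ε₁ ≤ (n:ℝ) := by
    have : (0:ℝ) ≤ 8 * (M:ℝ) / ε₁ := by positivity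
    linarith
  have h8n' : (8:ℝ) ≤ ε₁ * (n:ℝ) := by
    rw [div_le_iff₀ hε₁] at h8n; linarith
  -- the key claim: every long enough integer subinterval of [0,n] meets 𝒩
  have key : ∀ a b : ℤ, 0 ≤ a → b ≤ (n:ℤ) → ε₁ * (n:ℝ) / 4 ≤ (b:ℝ) - (a:ℝ) →
      ∃ r, r ∈ 𝒩 ∧ a ≤ r ∧ r ≤ b := by
    intro a b ha hb hlen
    by_contra hcon
    push_neg at hcon
    set a' : ℤ := max a (M : ℤ) with ha'def
    have ha'0 : 0 ≤ a' := le_trans ha (le_max_left _ _)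
    have hMa' : (M:ℤ) ≤ a' := le_max_right _ _
    have ha'le : (a':ℝ) ≤ (a:ℝ) + (M:ℝ) := by
      have : a' ≤ a + M := by
        rcases max_cases a (M:ℤ) with ⟨h1,_⟩|⟨h1,_⟩ <;> omega
      exact_mod_cast this
    have hba' : ε₁ * (n:ℝ) / 8 ≤ (b:ℝ) - (a':ℝ) := by
      have := hMn; linarith
    have ha'b : a' < b := by
      have h1 : (a':ℝ) < (b:ℝ) := by nlinarith
      exact_mod_cast h1
    have hb0 : 0 ≤ b := le_trans ha'0 (le_of_lt ha'b)
    set mA : ℕ := a'.toNat with hmA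
    set mB : ℕ := b.toNat with hmB
    have hcA : ((mA : ℤ) : ℝ) = (a' : ℝ) := by
      rw [Int.toNat_of_nonneg ha'0]
    have hcB : ((mB : ℤ) : ℝ) = (b : ℝ) := by
      rw [Int.toNat_of_nonneg hb0]
    have hMmA : M ≤ mA := by omega
    have hMmB : M ≤ mB := by omega
    have hsub : 𝒩 ∩ Set.Icc (0:ℤ) (mB:ℤ) ⊆ 𝒩 ∩ Set.Icc (0:ℤ) (mA:ℤ) := by
      rintro x ⟨hx𝒩, hx0, hxb⟩
      refine ⟨hx𝒩, hx0, ?_⟩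
      by_contra hxa
      push_neg at hxa
      have hax : a ≤ x := by omega
      have := hcon x hx𝒩 hax
      omega
    have hfin : (𝒩 ∩ Set.Icc (0:ℤ) (mA:ℤ)).Finite :=
      (Set.finite_Icc (0:ℤ) (mA:ℤ)).inter_of_right 𝒩
    have hcard : c mB ≤ c mA := by
      show ((𝒩 ∩ Set.Icc (0:ℤ) (mB:ℤ)).ncard : ℝ) ≤ ((𝒩 ∩ Set.Icc (0:ℤ) (mA:ℤ)).ncard : ℝ)
      exact_mod_cast Set.ncard_le_ncard hsub hfin
    have h1 := hlow mB hMmB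
    have h2 := hhigh mA hMmA
    have hmAn : (mA : ℝ) ≤ (n:ℝ) := by
      have h3 : a' ≤ (n:ℤ) := le_trans (le_of_lt ha'b) hb
      have : ((mA:ℤ):ℝ) ≤ ((n:ℤ):ℝ) := by rw [hcA]; exact_mod_cast h3
      exact_mod_cast this
    have hmBn : (mB : ℝ) ≤ (n:ℝ) := by
      have : ((mB:ℤ):ℝ) ≤ ((n:ℤ):ℝ) := by rw [hcB]; exact_mod_cast hb
      exact_mod_cast this
    have hmAR : (mA : ℝ) = (a' : ℝ) := by exact_mod_cast hcA
    have hmBR : (mB : ℝ) = (b : ℝ) := by exact_mod_cast hcB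
    rw [hmBR] at h1 hmBn
    rw [hmAR] at h2 hmAn
    -- (d-δ)(b+1) < c mB ≤ c mA < (d+δ)(a'+1)
    have hfinal : d * ((b:ℝ) - (a':ℝ)) < δ * ((b:ℝ) + (a':ℝ) + 2) := by nlinarith
    have hpos : 0 < d * ε₁ * (n:ℝ) := by positivity
    have h5 : δ * ((b:ℝ) + (a':ℝ) + 2) ≤ δ * (2 * (n:ℝ) + 2) := by
      apply mul_le_mul_of_nonneg_left _ hδ.le
      linarith
    have hn1R : (1:ℝ) ≤ (n:ℝ) := by exact_mod_cast hn1
    have h6 : δ * (2 * (n:ℝ) + 2) ≤ d * ε₁ * (n:ℝ) / 16 := by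
      have h2n : 2 * (n:ℝ) + 2 ≤ 4 * (n:ℝ) := by linarith
      have hA : δ * (2 * (n:ℝ) + 2) ≤ δ * (4 * (n:ℝ)) :=
        mul_le_mul_of_nonneg_left h2n hδ.le
      have hB : δ * (4 * (n:ℝ)) = d * ε₁ * (n:ℝ) / 16 := by rw [hδdef]; ring
      linarith
    have h7 : d * ε₁ * (n:ℝ) / 8 ≤ d * ((b:ℝ) - (a':ℝ)) := by
      have := mul_le_mul_of_nonneg_left hba' hd.le
      linarith
    linarith
  -- now find the interval around t * n
  obtain ⟨ht0, ht1⟩ := ht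
  set x : ℝ := t * (n:ℝ) with hx
  set L : ℝ := ε₁ * (n:ℝ) / 2 with hL
  have hL0 : 0 < L := by positivity
  have hLn : L ≤ (n:ℝ) := by
    rw [hL]; nlinarith
  have hx0 : 0 ≤ x := mul_nonneg ht0 hnpos.le
  have hxn : x ≤ (n:ℝ) := by
    rw [hx]
    calc t * (n:ℝ) ≤ 1 * (n:ℝ) := mul_le_mul_of_nonneg_right ht1 hnpos.le
      _ = (n:ℝ) := one_mul _
  set u : ℝ := min x ((n:ℝ) - L) with hu
  have hu0 : 0 ≤ u := le_min hx0 (by linarith)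
  have hux : u ≤ x := min_le_left _ _
  have hxuL : x ≤ u + L := by
    have : x - L ≤ u := le_min (by linarith) (by linarith)
    linarith
  have huLn : u + L ≤ (n:ℝ) := by
    have : u ≤ (n:ℝ) - L := min_le_right _ _
    linarith
  set a : ℤ := ⌈u⌉ with ha
  set b : ℤ := ⌊u + L⌋ with hb
  have ha0 : 0 ≤ a := Int.ceil_nonneg hu0
  have hbn : b ≤ (n:ℤ) := by
    have : (b:ℝ) ≤ (n:ℝ) := le_trans (Int.floor_le _) huLn
    exact_mod_cast this
  have hau : u ≤ (a:ℝ) := Int.le_ceil u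
  have hau1 : (a:ℝ) < u + 1 := Int.ceil_lt_add_one u
  have hbu : (b:ℝ) ≤ u + L := Int.floor_le _
  have hbu1 : u + L - 1 < (b:ℝ) := Int.sub_one_lt_floor _
  have hlen : ε₁ * (n:ℝ) / 4 ≤ (b:ℝ) - (a:ℝ) := by
    have h1 : L - 2 ≤ (b:ℝ) - (a:ℝ) := by linarith
    have h2 : ε₁ * (n:ℝ) / 4 ≤ L - 2 := by
      rw [hL]; linarith
    linarith
  obtain ⟨r, hr𝒩, hra, hrb⟩ := key a b ha0 hbn hlen
  refine ⟨r, le_trans ha0 hra, le_trans hrb hbn, hr𝒩, ?_⟩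
  have hru : u ≤ (r:ℝ) := le_trans hau (by exact_mod_cast hra)
  have hruL : (r:ℝ) ≤ u + L := le_trans (by exact_mod_cast hrb) hbu
  have habs : |(r:ℝ) - x| ≤ L := by
    rw [abs_le]; constructor <;> linarith
  have heq : (r:ℝ) / (n:ℝ) - t = ((r:ℝ) - x) / (n:ℝ) := by
    rw [hx]; field_simp
  rw [heq, abs_div, abs_of_pos hnpos]
  rw [div_lt_iff₀ hnpos]
  have : ε₁ / 2 < ε := by linarith
  calc |(r:ℝ) - x| ≤ L := habs
    _ < ε * (n:ℝ) := by rw [hL]; nlinarith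
end

section
/- Let 𝒩 ⊆ ℕ ⊆ ℤ and for n ≥ 1 write A(n) = (1/n)·#{0 ≤ i ≤ n−1 : i ∈ 𝒩}. Suppose β > 0, 0 < ε̄ < 2, and δ ∈ (0, β) satisfy (β + δ)/(β − δ) < 1 + ε̄/2; suppose n₀ ∈ ℕ is such that |β − A(n)| < δ for all n ≥ n₀; and suppose N₀ ∈ ℕ satisfies N₀ > max{2n₀/(ε̄(β − δ)), 4/ε̄}. Then for every integer n ≥ N₀ and every real t ∈ [0,1], there exists an integer r with 0 ≤ r ≤ n, r ∈ 𝒩, and |r/n − t| < ε̄. -/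
/-!
If the counting function `c(m) = #(𝒩 ∩ [0, m))` lies strictly between `(β - δ) m` and
`(β + δ) m` for `m ≥ n₀`, then `c(m₁) < c(m₂)` as soon as `m₂ ≥ (1 + ε/2) m₁`, because
`(β + δ) < (1 + ε/2)(β - δ)`; hence `𝒩` meets every interval `(x, y)` with `n₀ ≤ x` and
`(1 + ε/2)(x + 1) ≤ y`. For `t` with `(t - ε/2) n > n₀` this is applied to
`(x, y) = ((t - ε/2) n, min (n + 1) ((t + ε/2) n))`, the bound `N₀ > 4/ε` making the window
long enough. For smaller `t` it suffices that `𝒩` meets `[0, ε n / 2)`, which holds since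
`n₀ < ε (β - δ) n / 2` by the choice of `N₀`.
-/

open Set

def CountBetween (𝒩 : Set ℕ) (a b : ℝ) (n₀ : ℕ) : Prop :=
  ∀ m : ℕ, n₀ ≤ m → 0 < m → a * m < (𝒩 ∩ Iio m).ncard ∧ ((𝒩 ∩ Iio m).ncard : ℝ) < b * m

theorem countBetween_of_abs_sub_lt {𝒩 : Set ℕ} {A : ℕ → ℝ}
    (hA : ∀ n : ℕ, A n = ((𝒩 ∩ Iio n).ncard : ℝ) / (n : ℝ)) {β δ : ℝ} {n₀ : ℕ}
    (hn₀ : ∀ n : ℕ, n₀ ≤ n → |β - A n| < δ) : CountBetween 𝒩 (β - δ) (β + δ) n₀ := by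
  intro m hm hm0
  have hmR : (0 : ℝ) < m := Nat.cast_pos.mpr hm0
  have h := abs_lt.mp (hn₀ m hm)
  rw [hA m] at h
  exact ⟨(lt_div_iff₀ hmR).mp (by linarith), (div_lt_iff₀ hmR).mp (by linarith)⟩

theorem ncard_inter_Iio_le (𝒩 : Set ℕ) (m : ℕ) : (𝒩 ∩ Iio m).ncard ≤ m :=
  (ncard_le_ncard inter_subset_right (finite_Iio m)).trans_eq (ncard_Iio_nat m)

theorem exists_mem_Ico_of_ncard_lt {𝒩 : Set ℕ} {m₁ m₂ : ℕ}
    (h : (𝒩 ∩ Iio m₁).ncard < (𝒩 ∩ Iio m₂).ncard) : ∃ r ∈ 𝒩, m₁ ≤ r ∧ r < m₂ := by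
  obtain ⟨r, ⟨hr, hrm₂⟩, hnot⟩ :=
    exists_mem_notMem_of_ncard_lt_ncard h ((finite_Iio m₁).inter_of_right 𝒩)
  exact ⟨r, hr, not_lt.mp fun hrm₁ => hnot ⟨hr, hrm₁⟩, hrm₂⟩

namespace CountBetween

variable {𝒩 : Set ℕ} {a b : ℝ} {n₀ : ℕ}

theorem lt_one (h : CountBetween 𝒩 a b n₀) : a < 1 := by
  have hm : (0 : ℝ) < (max n₀ 1 : ℕ) := by positivity
  have hlow := (h (max n₀ 1) (le_max_left _ _) (by positivity)).1
  have hle : ((𝒩 ∩ Iio (max n₀ 1)).ncard : ℝ) ≤ (max n₀ 1 : ℕ) :=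
    Nat.cast_le.mpr (ncard_inter_Iio_le 𝒩 _)
  nlinarith

theorem lt (h : CountBetween 𝒩 a b n₀) : a < b := by
  have hm : (0 : ℝ) < (max n₀ 1 : ℕ) := by positivity
  have hab := h (max n₀ 1) (le_max_left _ _) (by positivity)
  exact lt_of_mul_lt_mul_right (hab.1.trans hab.2) hm.le

theorem one_lt (h : CountBetween 𝒩 a b n₀) (ha : 0 ≤ a) {q : ℝ} (hq : b < q * a) : 1 < q := by
  have hab := h.lt
  have ha0 : 0 < a := ha.lt_of_ne fun ha0 => by subst ha0; linarith
  exact lt_of_mul_lt_mul_right (by linarith : 1 * a < q * a) ha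

theorem exists_mem_lt (h : CountBetween 𝒩 a b n₀) (ha : 0 ≤ a) {y : ℝ} (hy : n₀ ≤ y)
    (hy0 : 0 < y) : ∃ r ∈ 𝒩, (r : ℝ) < y := by
  have hm0 : 0 < ⌈y⌉₊ := Nat.ceil_pos.mpr hy0
  have hpos : (0 : ℝ) < (𝒩 ∩ Iio ⌈y⌉₊).ncard :=
    lt_of_le_of_lt (by positivity) (h _ (Nat.cast_le.mp (hy.trans (Nat.le_ceil y))) hm0).1
  obtain ⟨r, hr, hry⟩ := nonempty_of_ncard_ne_zero (Nat.cast_pos.mp hpos).ne'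
  exact ⟨r, hr, (Nat.lt_ceil.mp hry)⟩

theorem exists_mem_Ico (h : CountBetween 𝒩 a b n₀) (ha : 0 ≤ a) {q : ℝ} (hq : b < q * a)
    {m₁ m₂ : ℕ} (hm₁ : n₀ ≤ m₁) (hm₁0 : 0 < m₁) (hm : q * m₁ ≤ m₂) :
    ∃ r ∈ 𝒩, m₁ ≤ r ∧ r < m₂ := by
  have hm₁R : (0 : ℝ) < m₁ := Nat.cast_pos.mpr hm₁0
  have h₁ := h m₁ hm₁ hm₁0
  have hm₁₂ : m₁ ≤ m₂ :=
    Nat.cast_le.mp ((le_mul_of_one_le_left hm₁R.le (h.one_lt ha hq).le).trans hm)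
  have h₂ := (h m₂ (hm₁.trans hm₁₂) (hm₁0.trans_le hm₁₂)).1
  refine exists_mem_Ico_of_ncard_lt ((Nat.cast_lt (α := ℝ)).mp ?_)
  calc ((𝒩 ∩ Iio m₁).ncard : ℝ) < b * m₁ := h₁.2
    _ ≤ (q * a) * m₁ := by gcongr
    _ = a * (q * m₁) := by ring
    _ ≤ a * m₂ := by gcongr
    _ < (𝒩 ∩ Iio m₂).ncard := h₂

theorem exists_mem_Ioo (h : CountBetween 𝒩 a b n₀) (ha : 0 ≤ a) {q : ℝ} (hq : b < q * a)
    {x y : ℝ} (hx : n₀ ≤ x) (hxy : q * (x + 1) ≤ y) : ∃ r ∈ 𝒩, x < r ∧ (r : ℝ) < y := by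
  have hx0 : 0 ≤ x := (Nat.cast_nonneg n₀).trans hx
  have hq0 : 0 ≤ q := zero_le_one.trans (h.one_lt ha hq).le
  have hxm : x < (⌊x⌋₊ + 1 : ℕ) := by push_cast; exact Nat.lt_floor_add_one x
  have hmx : ((⌊x⌋₊ + 1 : ℕ) : ℝ) ≤ x + 1 := by push_cast; linarith [Nat.floor_le hx0]
  obtain ⟨r, hr, hmr, hry⟩ := h.exists_mem_Ico ha hq (m₁ := ⌊x⌋₊ + 1) (m₂ := ⌈y⌉₊)
    (Nat.cast_le.mp (hx.trans hxm.le)) (Nat.succ_pos _)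
    (by calc q * ((⌊x⌋₊ + 1 : ℕ) : ℝ) ≤ q * (x + 1) := by gcongr
          _ ≤ y := hxy
          _ ≤ ⌈y⌉₊ := Nat.le_ceil y)
  exact ⟨r, hr, hxm.trans_le (Nat.cast_le.mpr hmr), Nat.lt_ceil.mp hry⟩

end CountBetween

theorem abs_div_sub_lt {r n t ε : ℝ} (hn : 0 < n) (h₁ : (t - ε) * n < r)
    (h₂ : r < (t + ε) * n) : |r / n - t| < ε := by
  rw [abs_sub_lt_iff, sub_lt_iff_lt_add', div_lt_iff₀ hn, sub_lt_comm, lt_div_iff₀ hn]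
  constructor <;> linarith

theorem approx_lemma_quantitative_general
    (𝒩 : Set ℕ)
    (A : ℕ → ℝ) (hA : ∀ n : ℕ, A n = ((𝒩 ∩ Set.Iio n).ncard : ℝ) / (n : ℝ))
    (β ε δ : ℝ) (hε0 : 0 < ε) (hε2 : ε < 2)
    (hδβ : δ < β)
    (hratio : (β + δ) / (β - δ) < 1 + ε / 2)
    (n₀ : ℕ) (hn₀ : ∀ n : ℕ, n₀ ≤ n → |β - A n| < δ)
    (N₀ : ℕ)
    (hN₀ : (N₀ : ℝ) > max (2 * (n₀ : ℝ) / (ε * (β - δ))) (4 / ε)) :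
    ∀ n : ℕ, N₀ ≤ n → ∀ t : ℝ, t ∈ Set.Icc (0 : ℝ) 1 →
      ∃ r : ℕ, r ∈ 𝒩 ∧ r ≤ n ∧ |(r : ℝ) / (n : ℝ) - t| < ε := by
  intro n hn t ⟨ht0, ht1⟩
  have hcount := countBetween_of_abs_sub_lt hA hn₀
  have hβδ : 0 < β - δ := sub_pos.mpr hδβ
  have hβδ1 := hcount.lt_one
  have hq : β + δ < (1 + ε / 2) * (β - δ) := (div_lt_iff₀ hβδ).mp hratio
  have hnN : (N₀ : ℝ) ≤ n := Nat.cast_le.mpr hn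
  have hεn : 4 < ε * n := (div_lt_iff₀' hε0).mp ((le_max_right _ _).trans_lt (hN₀.trans_le hnN))
  have hn₀n : (n₀ : ℝ) < ε * (β - δ) * n / 2 := by
    have := (div_lt_iff₀ (by positivity)).mp ((le_max_left _ _).trans_lt (hN₀.trans_le hnN))
    linarith
  have hn0 : (0 : ℝ) < n := by nlinarith
  rcases le_or_gt ((t - ε / 2) * n) n₀ with hsmall | hlarge
  · obtain ⟨r, hr, hrn⟩ :=
      hcount.exists_mem_lt hβδ.le (y := ε * n / 2) (by nlinarith) (by linarith)
    have htn : t * n < ε * n := by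
      nlinarith [mul_lt_mul_of_pos_left hβδ1 (by positivity : 0 < ε * n)]
    refine ⟨r, hr, (Nat.cast_le (α := ℝ)).mp (by nlinarith [mul_lt_mul_of_pos_right hε2 hn0]),
      abs_div_sub_lt hn0 (by nlinarith [Nat.cast_nonneg (α := ℝ) r]) (by nlinarith)⟩
  · have hwindow : (1 + ε / 2) * ((t - ε / 2) * n + 1) ≤ min ((n : ℝ) + 1) ((t + ε / 2) * n) :=
      le_min (by nlinarith) (by nlinarith)
    obtain ⟨r, hr, hxr, hry⟩ := hcount.exists_mem_Ioo hβδ.le hq hlarge.le hwindow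
    have hrn : (r : ℝ) < n + 1 := hry.trans_le (min_le_left _ _)
    refine ⟨r, hr, Nat.lt_succ_iff.mp (by exact_mod_cast hrn), abs_div_sub_lt hn0 ?_ ?_⟩
    · nlinarith
    · nlinarith [hry.trans_le (min_le_right _ _)]

/-- Quantitative form of **Lemma 2** of the paper, with the explicit choices of
`δ`, `n₀` and `N₀` made in its proof. Here `𝒩 ⊆ ℕ` and
`A(n) = (1/n) · #{0 ≤ i ≤ n−1 : i ∈ 𝒩}`. -/
theorem approx_lemma_quantitative
    (𝒩 : Set ℕ)
    (A : ℕ → ℝ) (hA : ∀ n : ℕ, A n = ((𝒩 ∩ Set.Iio n).ncard : ℝ) / (n : ℝ))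
    (β ε δ : ℝ) (hβ : 0 < β) (hε0 : 0 < ε) (hε2 : ε < 2)
    (hδ0 : 0 < δ) (hδβ : δ < β)
    (hratio : (β + δ) / (β - δ) < 1 + ε / 2)
    (n₀ : ℕ) (hn₀ : ∀ n : ℕ, n₀ ≤ n → |β - A n| < δ)
    (N₀ : ℕ)
    (hN₀ : (N₀ : ℝ) > max (2 * (n₀ : ℝ) / (ε * (β - δ))) (4 / ε)) :
    ∀ n : ℕ, N₀ ≤ n → ∀ t : ℝ, t ∈ Set.Icc (0 : ℝ) 1 →
      ∃ r : ℕ, r ∈ 𝒩 ∧ r ≤ n ∧ |(r : ℝ) / (n : ℝ) - t| < ε :=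
  approx_lemma_quantitative_general 𝒩 A hA β ε δ hε0 hε2 hδβ hratio n₀ hn₀ N₀ hN₀
end
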